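/- arXiv:2605.04855 — 2 statements merged into one kernel-verified Lean document; each statement's English description precedes it below -/
import Mathlib

section
/- Let (G1,c1) and (G2,c2) be W-state graphs with bichromatic edges e1 = x1x1' in G1 and e2 = x2x2' in G2. Form G by identifying x1 with x2 into a vertex x and x1' with x2' into a vertex x', retaining both edges e1, e2 between x and x', with colours inherited. Then (G,c) is a W-state graph. -/
/-! Multigraphs (parallel edges allowed, no loops) with half-edge 2-colourings,
    matchings, W-state graphs and W-cones, following the paper. -/

structure Multigraph (V E : Type) where
  fst : E → V
  snd : E → V
  no_loop : ∀ e, fst e ≠ snd e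

namespace Multigraph

variable {V E : Type} (G : Multigraph V E)

/-- Edge `e` is incident with vertex `v`. -/
def Inc (e : E) (v : V) : Prop := G.fst e = v ∨ G.snd e = v

/-- Adjacency using only edges in the edge set `F`. -/
def AdjIn (F : Set E) (u v : V) : Prop :=
  u ≠ v ∧ ∃ e ∈ F, G.Inc e u ∧ G.Inc e v

def Adj (u v : V) : Prop := G.AdjIn Set.univ u v

/-- Reachability inside the vertex set `S`, using only edges in `F`. -/
def ReachOn (F : Set E) (S : Set V) (u v : V) : Prop :=
  Relation.ReflTransGen (fun a b => a ∈ S ∧ b ∈ S ∧ G.AdjIn F a b) u v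

/-- The subgraph with edge set `F` induced on the vertex set `S` is connected. -/
def ConnectedOn (F : Set E) (S : Set V) : Prop :=
  ∀ u ∈ S, ∀ v ∈ S, G.ReachOn F S u v

def Connected : Prop := G.ConnectedOn Set.univ Set.univ

/-- `K` is a connected component of the subgraph with edge set `F` induced on `S`. -/
def IsCompOn (F : Set E) (S : Set V) (K : Set V) : Prop :=
  ∃ v ∈ S, K = {u | u ∈ S ∧ G.ReachOn F S u v}

def IsMatching (M : Set E) : Prop :=
  ∀ e ∈ M, ∀ f ∈ M, e ≠ f → ∀ v : V, ¬ (G.Inc e v ∧ G.Inc f v)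

/-- `M` is a perfect matching of the subgraph of `G` induced on `S`. -/
def IsPerfectMatchingOn (S : Set V) (M : Set E) : Prop :=
  (∀ e ∈ M, G.fst e ∈ S ∧ G.snd e ∈ S) ∧
  ∀ v ∈ S, ∃! e, e ∈ M ∧ G.Inc e v

def IsPerfectMatching (M : Set E) : Prop :=
  G.IsPerfectMatchingOn Set.univ M

/-- Every edge lies in some perfect matching. -/
def MatchingCovered : Prop :=
  ∀ e : E, ∃ M : Set E, G.IsPerfectMatching M ∧ e ∈ M

/-- The subgraph with edge set `F` induced on `K` is factor-critical. -/
def FactorCriticalOn (F : Set E) (K : Set V) : Prop :=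
  ∀ v ∈ K, ∃ M : Set E, M ⊆ F ∧ G.IsPerfectMatchingOn (K \ {v}) M

def FactorCritical : Prop := G.FactorCriticalOn Set.univ Set.univ

/-- `M` is a maximum matching among matchings using only edges in `F`. -/
def IsMaxMatchingIn (F M : Set E) : Prop :=
  M ⊆ F ∧ G.IsMatching M ∧
  ∀ N : Set E, N ⊆ F → G.IsMatching N → N.ncard ≤ M.ncard

/-- Half-edge 2-colourings are functions `c : E → V → Bool`
    (`true` = red, `false` = blue; only the values at endpoints matter). -/
def Bichromatic (c : E → V → Bool) (e : E) : Prop :=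
  c e (G.fst e) ≠ c e (G.snd e)

/-- The monochromatic edges. -/
def MonoEdges (c : E → V → Bool) : Set E := {e | ¬ G.Bichromatic c e}

/-- Every vertex has an incident red half-edge. -/
def VertexCond (c : E → V → Bool) : Prop :=
  ∀ v : V, ∃ e : E, G.Inc e v ∧ c e v = true

/-- Every perfect matching contains exactly one bichromatic edge. -/
def MatchingCond (c : E → V → Bool) : Prop :=
  ∀ M : Set E, G.IsPerfectMatching M → ∃! e, e ∈ M ∧ G.Bichromatic c e

/-- All monochromatic edges are blue. -/
def NoRedMono (c : E → V → Bool) : Prop :=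
  ∀ e : E, ¬ G.Bichromatic c e → c e (G.fst e) = false

/-- W-state graph. -/
def IsWState (c : E → V → Bool) : Prop :=
  G.MatchingCovered ∧ G.MatchingCond c ∧ G.VertexCond c ∧ G.NoRedMono c

def Universal (v : V) : Prop := ∀ u : V, u ≠ v → G.Adj u v

/-- W-cone with apex `v`. -/
def IsWConeWithApex (c : E → V → Bool) (v : V) : Prop :=
  G.MatchingCovered ∧ G.Universal v ∧
  (∀ e : E, G.Bichromatic c e ↔ G.Inc e v) ∧
  G.VertexCond c ∧ G.NoRedMono c

def IsWCone (c : E → V → Bool) : Prop := ∃ v : V, G.IsWConeWithApex c v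

/-- `e` and `f` are parallel edges (same pair of endpoints). -/
def Parallel (e f : E) : Prop :=
  (G.fst e = G.fst f ∧ G.snd e = G.snd f) ∨
  (G.fst e = G.snd f ∧ G.snd e = G.fst f)

/-- The cut `δ(X)`. -/
def CutEdges (X : Set V) : Set E :=
  {e | (G.fst e ∈ X ∧ G.snd e ∉ X) ∨ (G.fst e ∉ X ∧ G.snd e ∈ X)}

/-- `δ(X)` is a tight cut. -/
def IsTightCut (X : Set V) : Prop :=
  ∀ M : Set E, G.IsPerfectMatching M → ∃! e, e ∈ M ∧ e ∈ G.CutEdges X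

def Bipartite : Prop :=
  ∃ f : V → Bool, ∀ e : E, f (G.fst e) ≠ f (G.snd e)

/-- A brick: non-bipartite matching-covered graph with no non-trivial tight cut. -/
def IsBrick : Prop :=
  G.MatchingCovered ∧ ¬ G.Bipartite ∧
  ∀ X : Set V, 2 ≤ X.ncard → 2 ≤ (Set.univ \ X).ncard → ¬ G.IsTightCut X

end Multigraph


section Helpers

open Multigraph

/-- A set of vertices admitting a perfect matching has even cardinality. -/
lemma pm_even {V E : Type} (G : Multigraph V E) (S : Set V) (M : Set E)
    (h : G.IsPerfectMatchingOn S M) : Even S.ncard := by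
  classical
  have hF : ∀ p : ↥M × Bool, (if p.2 then G.fst p.1.1 else G.snd p.1.1) ∈ S := by
    rintro ⟨⟨e, he⟩, b⟩
    cases b <;> simp [(h.1 e he).1, (h.1 e he).2]
  have hbij : Function.Bijective
      (fun p : ↥M × Bool => (⟨if p.2 then G.fst p.1.1 else G.snd p.1.1, hF p⟩ : ↥S)) := by
    constructor
    · rintro ⟨⟨e, he⟩, b⟩ ⟨⟨f, hf⟩, b'⟩ hef
      simp only [Subtype.mk.injEq] at hef
      cases b <;> cases b' <;> simp only [if_true, if_false, Bool.false_eq_true] at hef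
      · have hmem : G.snd f ∈ S := (h.1 f hf).2
        have hef' : e = f := (h.2 _ hmem).unique ⟨he, Or.inr hef⟩ ⟨hf, Or.inr rfl⟩
        simp [hef']
      · exfalso
        have hmem : G.fst f ∈ S := (h.1 f hf).1
        have hef' : e = f := (h.2 _ hmem).unique ⟨he, Or.inr hef⟩ ⟨hf, Or.inl rfl⟩
        exact G.no_loop f (hef' ▸ hef).symm
      · exfalso
        have hmem : G.snd f ∈ S := (h.1 f hf).2
        have hef' : e = f := (h.2 _ hmem).unique ⟨he, Or.inl hef⟩ ⟨hf, Or.inr rfl⟩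
        exact G.no_loop f (hef' ▸ hef)
      · have hmem : G.fst f ∈ S := (h.1 f hf).1
        have hef' : e = f := (h.2 _ hmem).unique ⟨he, Or.inl hef⟩ ⟨hf, Or.inl rfl⟩
        simp [hef']
    · rintro ⟨v, hv⟩
      obtain ⟨e, ⟨heM, hinc⟩, _⟩ := h.2 v hv
      rcases hinc with hh | hh
      · exact ⟨⟨⟨e, heM⟩, true⟩, by simp [hh]⟩
      · exact ⟨⟨⟨e, heM⟩, false⟩, by simp [hh]⟩
  have hcard : Nat.card (↥M × Bool) = Nat.card ↥S := Nat.card_eq_of_bijective _ hbij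
  rw [Nat.card_prod] at hcard
  have hb : Nat.card Bool = 2 := by simp [Nat.card_eq_fintype_card]
  rw [hb] at hcard
  refine ⟨Nat.card ↥M, ?_⟩
  rw [← Nat.card_coe_set_eq, ← hcard]; ring

/-- Incidence transfers along the embedding. -/
lemma inc_iff {V1 E1 V E : Type} (G1 : Multigraph V1 E1) (G : Multigraph V E)
    (φ : V1 → V) (ψ : E1 → E) (hφ : Function.Injective φ)
    (hends : ∀ a, G.fst (ψ a) = φ (G1.fst a) ∧ G.snd (ψ a) = φ (G1.snd a))
    (a : E1) (w : V1) : G.Inc (ψ a) (φ w) ↔ G1.Inc a w := by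
  unfold Multigraph.Inc
  rw [(hends a).1, (hends a).2]
  constructor
  · rintro (h | h)
    · exact Or.inl (hφ h)
    · exact Or.inr (hφ h)
  · rintro (h | h)
    · exact Or.inl (congrArg φ h)
    · exact Or.inr (congrArg φ h)

/-- Any vertex incident to an embedded edge is an embedded vertex. -/
lemma inc_pull {V1 E1 V E : Type} (G1 : Multigraph V1 E1) (G : Multigraph V E)
    (φ : V1 → V) (ψ : E1 → E)
    (hends : ∀ a, G.fst (ψ a) = φ (G1.fst a) ∧ G.snd (ψ a) = φ (G1.snd a))
    (a : E1) (v : V) (h : G.Inc (ψ a) v) : ∃ w, φ w = v ∧ G1.Inc a w := by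
  rcases h with h | h
  · exact ⟨G1.fst a, by rw [← (hends a).1]; exact h, Or.inl rfl⟩
  · exact ⟨G1.snd a, by rw [← (hends a).2]; exact h, Or.inr rfl⟩

/-- Bichromaticity transfers along the embedding. -/
lemma bich_iff {V1 E1 V E : Type} (G1 : Multigraph V1 E1) (G : Multigraph V E)
    (c1 : E1 → V1 → Bool) (c : E → V → Bool)
    (φ : V1 → V) (ψ : E1 → E)
    (hends : ∀ a, G.fst (ψ a) = φ (G1.fst a) ∧ G.snd (ψ a) = φ (G1.snd a))
    (hc : ∀ a w, G1.Inc a w → c (ψ a) (φ w) = c1 a w)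
    (a : E1) : G.Bichromatic c (ψ a) ↔ G1.Bichromatic c1 a := by
  unfold Multigraph.Bichromatic
  rw [(hends a).1, (hends a).2, hc a _ (Or.inl rfl), hc a _ (Or.inr rfl)]

/-- Main auxiliary theorem, applied with the two sides in both orders. -/
theorem stmt17_aux {V1 E1 V2 E2 V E : Type}
    [Fintype V1] [Fintype E1] [Fintype V2] [Fintype E2] [Fintype V] [Fintype E]
    (G1 : Multigraph V1 E1) (G2 : Multigraph V2 E2) (G : Multigraph V E)
    (c1 : E1 → V1 → Bool) (c2 : E2 → V2 → Bool) (c : E → V → Bool)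
    (h1 : G1.IsWState c1) (h2 : G2.IsWState c2)
    (e1 : E1) (e2 : E2)
    (hb1 : G1.Bichromatic c1 e1) (hb2 : G2.Bichromatic c2 e2)
    (φ1 : V1 → V) (φ2 : V2 → V) (ψ1 : E1 → E) (ψ2 : E2 → E)
    (hφ1 : Function.Injective φ1) (hφ2 : Function.Injective φ2)
    (hψ1 : Function.Injective ψ1) (hψ2 : Function.Injective ψ2)
    (hV : ∀ v : V, (∃ a, φ1 a = v) ∨ (∃ b, φ2 b = v))
    (hx : φ1 (G1.fst e1) = φ2 (G2.fst e2))
    (hx' : φ1 (G1.snd e1) = φ2 (G2.snd e2))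
    (hVcap : ∀ a b, φ1 a = φ2 b →
        (a = G1.fst e1 ∧ b = G2.fst e2) ∨ (a = G1.snd e1 ∧ b = G2.snd e2))
    (hE : ∀ e : E, (∃ a, ψ1 a = e) ∨ (∃ b, ψ2 b = e))
    (hEdisj : ∀ a b, ψ1 a ≠ ψ2 b)
    (hends1 : ∀ a, G.fst (ψ1 a) = φ1 (G1.fst a) ∧ G.snd (ψ1 a) = φ1 (G1.snd a))
    (hends2 : ∀ b, G.fst (ψ2 b) = φ2 (G2.fst b) ∧ G.snd (ψ2 b) = φ2 (G2.snd b))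
    (hc1 : ∀ a w, G1.Inc a w → c (ψ1 a) (φ1 w) = c1 a w)
    (hc2 : ∀ b w, G2.Inc b w → c (ψ2 b) (φ2 w) = c2 b w) :
    (∀ a : E1, ∃ M, G.IsPerfectMatching M ∧ ψ1 a ∈ M) ∧
    (∀ M, G.IsPerfectMatching M →
      (∀ e ∈ M, G.Inc e (φ1 (G1.fst e1)) ∨ G.Inc e (φ1 (G1.snd e1)) → ∃ a, ψ1 a = e) →
      ∃! e, e ∈ M ∧ G.Bichromatic c e) ∧
    (∀ M, G.IsPerfectMatching M →
      (∃ a0, ψ1 a0 ∈ M ∧ G.Inc (ψ1 a0) (φ1 (G1.fst e1))) →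
      (∃ b0, ψ2 b0 ∈ M ∧ G.Inc (ψ2 b0) (φ1 (G1.snd e1))) → False) := by
  have inc1 := inc_iff G1 G φ1 ψ1 hφ1 hends1
  have inc2 := inc_iff G2 G φ2 ψ2 hφ2 hends2
  have bich1 := bich_iff G1 G c1 c φ1 ψ1 hends1 hc1
  have bich2 := bich_iff G2 G c2 c φ2 ψ2 hends2 hc2
  refine ⟨?_, ?_, ?_⟩
  · -- matching covered for side-1 edges
    intro a
    obtain ⟨M1, hM1, haM1⟩ := h1.1 a
    obtain ⟨M2', hM2', he2M2'⟩ := h2.1 e2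
    have cov1 : ∀ w : V1,
        ∃! e, e ∈ (ψ1 '' M1 ∪ ψ2 '' (M2' \ {e2})) ∧ G.Inc e (φ1 w) := by
      intro w
      obtain ⟨a', ⟨ha'M, ha'inc⟩, huniq⟩ := hM1.2 w (Set.mem_univ w)
      refine ⟨ψ1 a', ⟨Or.inl ⟨a', ha'M, rfl⟩, (inc1 _ _).2 ha'inc⟩, ?_⟩
      rintro f ⟨hf, hinc⟩
      rcases hf with ⟨a'', ha'', rfl⟩ | ⟨b, hb, rfl⟩
      · exact congrArg ψ1 (huniq a'' ⟨ha'', (inc1 _ _).1 hinc⟩)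
      · exfalso
        obtain ⟨bw, hbw, hbinc⟩ := inc_pull G2 G φ2 ψ2 hends2 b _ hinc
        have hbne : b ≠ e2 := fun h => hb.2 (by simp [h])
        rcases hVcap w bw hbw.symm with ⟨_, hbw2⟩ | ⟨_, hbw2⟩
        · exact hbne ((hM2'.2 (G2.fst e2) (Set.mem_univ _)).unique
            ⟨hb.1, hbw2 ▸ hbinc⟩ ⟨he2M2', Or.inl rfl⟩)
        · exact hbne ((hM2'.2 (G2.snd e2) (Set.mem_univ _)).unique
            ⟨hb.1, hbw2 ▸ hbinc⟩ ⟨he2M2', Or.inr rfl⟩)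
    have cov2 : ∀ w : V2, w ≠ G2.fst e2 → w ≠ G2.snd e2 →
        ∃! e, e ∈ (ψ1 '' M1 ∪ ψ2 '' (M2' \ {e2})) ∧ G.Inc e (φ2 w) := by
      intro w hw1 hw2
      obtain ⟨b', ⟨hb'M, hb'inc⟩, huniq⟩ := hM2'.2 w (Set.mem_univ w)
      have hb'ne : b' ≠ e2 := by
        rintro rfl
        rcases hb'inc with h | h
        · exact hw1 h.symm
        · exact hw2 h.symm
      refine ⟨ψ2 b', ⟨Or.inr ⟨b', ⟨hb'M, by simp [hb'ne]⟩, rfl⟩, (inc2 _ _).2 hb'inc⟩, ?_⟩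
      rintro f ⟨hf, hinc⟩
      rcases hf with ⟨a'', _, rfl⟩ | ⟨b'', hb'', rfl⟩
      · exfalso
        obtain ⟨aw, haw, _⟩ := inc_pull G1 G φ1 ψ1 hends1 a'' _ hinc
        rcases hVcap aw w haw with ⟨_, hw⟩ | ⟨_, hw⟩
        · exact hw1 hw
        · exact hw2 hw
      · exact congrArg ψ2 (huniq b'' ⟨hb''.1, (inc2 _ _).1 hinc⟩)
    refine ⟨ψ1 '' M1 ∪ ψ2 '' (M2' \ {e2}),
      ⟨fun e _ => ⟨Set.mem_univ _, Set.mem_univ _⟩, ?_⟩, Or.inl ⟨a, haM1, rfl⟩⟩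
    intro v _
    rcases hV v with ⟨w, rfl⟩ | ⟨w, rfl⟩
    · exact cov1 w
    · by_cases hw1 : w = G2.fst e2
      · subst hw1; rw [← hx]; exact cov1 _
      · by_cases hw2 : w = G2.snd e2
        · subst hw2; rw [← hx']; exact cov1 _
        · exact cov2 w hw1 hw2
  · -- unique bichromatic edge when both gluing vertices are matched from side 1
    intro M hM hside
    have hM1pm : G1.IsPerfectMatching {a | ψ1 a ∈ M} := by
      refine ⟨fun a _ => ⟨Set.mem_univ _, Set.mem_univ _⟩, fun w _ => ?_⟩
      obtain ⟨e, ⟨heM, heinc⟩, huniq⟩ := hM.2 (φ1 w) (Set.mem_univ _)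
      have hrange : ∃ a, ψ1 a = e := by
        rcases hE e with h | ⟨b, rfl⟩
        · exact h
        · obtain ⟨bw, hbw, _⟩ := inc_pull G2 G φ2 ψ2 hends2 b _ heinc
          rcases hVcap w bw hbw.symm with ⟨hw, _⟩ | ⟨hw, _⟩
          · obtain ⟨a, ha⟩ := hside _ heM (Or.inl (hw ▸ heinc))
            exact absurd ha (hEdisj a b)
          · obtain ⟨a, ha⟩ := hside _ heM (Or.inr (hw ▸ heinc))
            exact absurd ha (hEdisj a b)
      obtain ⟨a, rfl⟩ := hrange
      refine ⟨a, ⟨heM, (inc1 a w).1 heinc⟩, ?_⟩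
      rintro a' ⟨ha'M, ha'inc⟩
      exact hψ1 (huniq (ψ1 a') ⟨ha'M, (inc1 _ _).2 ha'inc⟩)
    have hnotx2 : ∀ b, ψ2 b ∈ M → ¬ G2.Inc b (G2.fst e2) := by
      intro b hbM hbinc
      have hI : G.Inc (ψ2 b) (φ1 (G1.fst e1)) := by
        rw [hx]; exact (inc2 b _).2 hbinc
      obtain ⟨a, ha⟩ := hside _ hbM (Or.inl hI)
      exact hEdisj a b ha
    have hnotx2' : ∀ b, ψ2 b ∈ M → ¬ G2.Inc b (G2.snd e2) := by
      intro b hbM hbinc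
      have hI : G.Inc (ψ2 b) (φ1 (G1.snd e1)) := by
        rw [hx']; exact (inc2 b _).2 hbinc
      obtain ⟨a, ha⟩ := hside _ hbM (Or.inr hI)
      exact hEdisj a b ha
    have he2not : ψ2 e2 ∉ M := fun h => hnotx2 e2 h (Or.inl rfl)
    have hM2pm : G2.IsPerfectMatching (insert e2 {b | ψ2 b ∈ M}) := by
      refine ⟨fun b _ => ⟨Set.mem_univ _, Set.mem_univ _⟩, fun w _ => ?_⟩
      by_cases hw1 : w = G2.fst e2
      · subst hw1
        refine ⟨e2, ⟨Set.mem_insert _ _, Or.inl rfl⟩, ?_⟩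
        rintro b ⟨hb, hbinc⟩
        rcases Set.mem_insert_iff.1 hb with rfl | hbM
        · rfl
        · exact absurd hbinc (hnotx2 b hbM)
      · by_cases hw2 : w = G2.snd e2
        · subst hw2
          refine ⟨e2, ⟨Set.mem_insert _ _, Or.inr rfl⟩, ?_⟩
          rintro b ⟨hb, hbinc⟩
          rcases Set.mem_insert_iff.1 hb with rfl | hbM
          · rfl
          · exact absurd hbinc (hnotx2' b hbM)
        · obtain ⟨e, ⟨heM, heinc⟩, huniq⟩ := hM.2 (φ2 w) (Set.mem_univ _)
          have hrange : ∃ b, ψ2 b = e := by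
            rcases hE e with ⟨a, rfl⟩ | h
            · exfalso
              obtain ⟨aw, haw, _⟩ := inc_pull G1 G φ1 ψ1 hends1 a _ heinc
              rcases hVcap aw w haw with ⟨_, hw⟩ | ⟨_, hw⟩
              · exact hw1 hw
              · exact hw2 hw
            · exact h
          obtain ⟨b, rfl⟩ := hrange
          refine ⟨b, ⟨Set.mem_insert_of_mem _ heM, (inc2 b w).1 heinc⟩, ?_⟩
          rintro b' ⟨hb', hbinc'⟩
          rcases Set.mem_insert_iff.1 hb' with rfl | hb'M
          · exfalso
            rcases hbinc' with h | h
            · exact hw1 h.symm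
            · exact hw2 h.symm
          · exact hψ2 (huniq (ψ2 b') ⟨hb'M, (inc2 _ _).2 hbinc'⟩)
    obtain ⟨f2, hf2, hf2u⟩ := h2.2.1 _ hM2pm
    have he2uniq : ∀ b, ψ2 b ∈ M → ¬ G2.Bichromatic c2 b := by
      intro b hbM hbbich
      have hbe : b = f2 := hf2u b ⟨Set.mem_insert_of_mem _ hbM, hbbich⟩
      have he2e : e2 = f2 := hf2u e2 ⟨Set.mem_insert _ _, hb2⟩
      rw [hbe, ← he2e] at hbM
      exact he2not hbM
    obtain ⟨astar, ⟨hamem, habich⟩, hau⟩ := h1.2.1 _ hM1pm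
    refine ⟨ψ1 astar, ⟨hamem, (bich1 _).2 habich⟩, ?_⟩
    rintro f ⟨hfM, hfbich⟩
    rcases hE f with ⟨a, rfl⟩ | ⟨b, rfl⟩
    · exact congrArg ψ1 (hau a ⟨hfM, (bich1 a).1 hfbich⟩)
    · exact absurd ((bich2 b).1 hfbich) (he2uniq b hfM)
  · -- mixed case is impossible by parity
    rintro M hM ⟨a0, ha0M, ha0inc⟩ ⟨b0, hb0M, hb0inc⟩
    have hM1 : G1.IsPerfectMatchingOn (Set.univ \ {G1.snd e1}) {a | ψ1 a ∈ M} := by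
      constructor
      · intro a haM
        have key : ∀ w, G1.Inc a w → w ≠ G1.snd e1 := by
          intro w hw hwx
          subst hwx
          have hI : G.Inc (ψ1 a) (φ1 (G1.snd e1)) := (inc1 _ _).2 hw
          have heq := (hM.2 (φ1 (G1.snd e1)) (Set.mem_univ _)).unique
            ⟨haM, hI⟩ ⟨hb0M, hb0inc⟩
          exact hEdisj a b0 heq
        exact ⟨⟨Set.mem_univ _, by simpa using key _ (Or.inl rfl)⟩,
               ⟨Set.mem_univ _, by simpa using key _ (Or.inr rfl)⟩⟩
      · intro w hw
        have hwne : w ≠ G1.snd e1 := by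
          intro h; exact hw.2 (by simp [h])
        obtain ⟨e, ⟨heM, heinc⟩, huniq⟩ := hM.2 (φ1 w) (Set.mem_univ _)
        have hrange : ∃ a, ψ1 a = e := by
          rcases hE e with h | ⟨b, rfl⟩
          · exact h
          · exfalso
            obtain ⟨bw, hbw, _⟩ := inc_pull G2 G φ2 ψ2 hends2 b _ heinc
            rcases hVcap w bw hbw.symm with ⟨hw1, _⟩ | ⟨hw1, _⟩
            · have heq := (hM.2 (φ1 (G1.fst e1)) (Set.mem_univ _)).unique
                ⟨ha0M, ha0inc⟩ ⟨heM, hw1 ▸ heinc⟩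
              exact hEdisj a0 b heq
            · exact hwne hw1
        obtain ⟨a, rfl⟩ := hrange
        refine ⟨a, ⟨heM, (inc1 a w).1 heinc⟩, ?_⟩
        rintro a' ⟨ha'M, ha'inc⟩
        exact hψ1 (huniq (ψ1 a') ⟨ha'M, (inc1 _ _).2 ha'inc⟩)
    obtain ⟨M0, hM0, _⟩ := h1.1 e1
    have hev1 : Even (Set.univ : Set V1).ncard := pm_even G1 _ _ hM0
    have hev2 : Even ((Set.univ : Set V1) \ {G1.snd e1}).ncard := pm_even G1 _ _ hM1
    have hcard : ((Set.univ : Set V1) \ {G1.snd e1}).ncard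
        = (Set.univ : Set V1).ncard - 1 :=
      Set.ncard_diff_singleton_of_mem (Set.mem_univ _)
    have hpos : 0 < (Set.univ : Set V1).ncard :=
      (Set.ncard_pos Set.finite_univ).2 ⟨G1.snd e1, Set.mem_univ _⟩
    obtain ⟨k, hk⟩ := hev1
    obtain ⟨l, hl⟩ := hev2
    omega

end Helpers

/-- Retained W-union.  `G` is obtained from W-state graphs
`(G1,c1)` and `(G2,c2)` by identifying the endpoints of a bichromatic edge
`e1` of `G1` with the endpoints of a bichromatic edge `e2` of `G2`
(`fst e1 ~ fst e2 ↦ x`, `snd e1 ~ snd e2 ↦ x'`), keeping both edges `e1,e2`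
and all other vertices and edges, with colours inherited.  This situation is
expressed by injections `φ1, φ2` on vertices and `ψ1, ψ2` on edges.
Then `(G,c)` is again a W-state graph. -/
theorem stmt17 {V1 E1 V2 E2 V E : Type}
    [Fintype V1] [Fintype E1] [Fintype V2] [Fintype E2] [Fintype V] [Fintype E]
    (G1 : Multigraph V1 E1) (G2 : Multigraph V2 E2) (G : Multigraph V E)
    (c1 : E1 → V1 → Bool) (c2 : E2 → V2 → Bool) (c : E → V → Bool)
    (h1 : G1.IsWState c1) (h2 : G2.IsWState c2)
    (e1 : E1) (e2 : E2)
    (hb1 : G1.Bichromatic c1 e1) (hb2 : G2.Bichromatic c2 e2)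
    (φ1 : V1 → V) (φ2 : V2 → V) (ψ1 : E1 → E) (ψ2 : E2 → E)
    (hφ1 : Function.Injective φ1) (hφ2 : Function.Injective φ2)
    (hψ1 : Function.Injective ψ1) (hψ2 : Function.Injective ψ2)
    -- the vertices of G are exactly the vertices of G1 and G2 …
    (hV : ∀ v : V, (∃ a, φ1 a = v) ∨ (∃ b, φ2 b = v))
    -- … identified precisely along the endpoints of e1 and e2:
    (hx : φ1 (G1.fst e1) = φ2 (G2.fst e2))
    (hx' : φ1 (G1.snd e1) = φ2 (G2.snd e2))
    (hVcap : ∀ a b, φ1 a = φ2 b →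
        (a = G1.fst e1 ∧ b = G2.fst e2) ∨ (a = G1.snd e1 ∧ b = G2.snd e2))
    -- the edges of G are exactly the edges of G1 together with those of G2:
    (hE : ∀ e : E, (∃ a, ψ1 a = e) ∨ (∃ b, ψ2 b = e))
    (hEdisj : ∀ a b, ψ1 a ≠ ψ2 b)
    -- endpoints are preserved:
    (hends1 : ∀ a, G.fst (ψ1 a) = φ1 (G1.fst a) ∧ G.snd (ψ1 a) = φ1 (G1.snd a))
    (hends2 : ∀ b, G.fst (ψ2 b) = φ2 (G2.fst b) ∧ G.snd (ψ2 b) = φ2 (G2.snd b))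
    -- colours of half-edges are inherited:
    (hc1 : ∀ a w, G1.Inc a w → c (ψ1 a) (φ1 w) = c1 a w)
    (hc2 : ∀ b w, G2.Inc b w → c (ψ2 b) (φ2 w) = c2 b w) :
    G.IsWState c := by
  have inc1 := inc_iff G1 G φ1 ψ1 hφ1 hends1
  have inc2 := inc_iff G2 G φ2 ψ2 hφ2 hends2
  have bich1 := bich_iff G1 G c1 c φ1 ψ1 hends1 hc1
  have bich2 := bich_iff G2 G c2 c φ2 ψ2 hends2 hc2
  have aux1 := stmt17_aux G1 G2 G c1 c2 c h1 h2 e1 e2 hb1 hb2 φ1 φ2 ψ1 ψ2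
    hφ1 hφ2 hψ1 hψ2 hV hx hx' hVcap hE hEdisj hends1 hends2 hc1 hc2
  have aux2 := stmt17_aux G2 G1 G c2 c1 c h2 h1 e2 e1 hb2 hb1 φ2 φ1 ψ2 ψ1
    hφ2 hφ1 hψ2 hψ1 (fun v => (hV v).symm) hx.symm hx'.symm
    (fun b a h => ((hVcap a b h.symm).imp (fun p => ⟨p.2, p.1⟩) (fun p => ⟨p.2, p.1⟩)))
    (fun e => (hE e).symm) (fun b a h => hEdisj a b h.symm)
    hends2 hends1 hc2 hc1
  refine ⟨?_, ?_, ?_, ?_⟩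
  · -- matching covered
    intro e
    rcases hE e with ⟨a, rfl⟩ | ⟨b, rfl⟩
    · exact aux1.1 a
    · exact aux2.1 b
  · -- matching condition
    intro M hM
    obtain ⟨eX, ⟨heXM, heXinc⟩, huniqX⟩ := hM.2 (φ1 (G1.fst e1)) (Set.mem_univ _)
    obtain ⟨eX', ⟨heX'M, heX'inc⟩, huniqX'⟩ := hM.2 (φ1 (G1.snd e1)) (Set.mem_univ _)
    rcases hE eX with ⟨aX, rfl⟩ | ⟨bX, rfl⟩ <;>
      rcases hE eX' with ⟨aX', rfl⟩ | ⟨bX', rfl⟩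
    · refine aux1.2.1 M hM ?_
      intro e heM hinc
      rcases hinc with h | h
      · exact ⟨aX, (huniqX e ⟨heM, h⟩).symm⟩
      · exact ⟨aX', (huniqX' e ⟨heM, h⟩).symm⟩
    · exact (aux1.2.2 M hM ⟨aX, heXM, heXinc⟩ ⟨bX', heX'M, heX'inc⟩).elim
    · exact (aux2.2.2 M hM ⟨bX, heXM, hx ▸ heXinc⟩ ⟨aX', heX'M, hx' ▸ heX'inc⟩).elim
    · refine aux2.2.1 M hM ?_
      intro e heM hinc
      rcases hinc with h | h
      · rw [← hx] at h
        exact ⟨bX, (huniqX e ⟨heM, h⟩).symm⟩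
      · rw [← hx'] at h
        exact ⟨bX', (huniqX' e ⟨heM, h⟩).symm⟩
  · -- vertex condition
    intro v
    rcases hV v with ⟨w, rfl⟩ | ⟨w, rfl⟩
    · obtain ⟨a, hainc, hared⟩ := h1.2.2.1 w
      exact ⟨ψ1 a, (inc1 a w).2 hainc, by rw [hc1 a w hainc]; exact hared⟩
    · obtain ⟨b, hbinc, hbred⟩ := h2.2.2.1 w
      exact ⟨ψ2 b, (inc2 b w).2 hbinc, by rw [hc2 b w hbinc]; exact hbred⟩
  · -- no red monochromatic edges
    intro e hmono
    rcases hE e with ⟨a, rfl⟩ | ⟨b, rfl⟩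
    · have hm := h1.2.2.2 a (fun hb => hmono ((bich1 a).2 hb))
      rw [(hends1 a).1, hc1 a _ (Or.inl rfl)]
      exact hm
    · have hm := h2.2.2.2 b (fun hb => hmono ((bich2 b).2 hb))
      rw [(hends2 b).1, hc2 b _ (Or.inl rfl)]
      exact hm
end

section
/- Let (G,c) be a W-state graph with vertex partition V = X ⊔ X' into the two factor-critical monochromatic components, and let {x,x'} with x ∈ X, x' ∈ X' be a 2-vertex cut. For each connected component C of G - {x,x'}, form H from G[V(C) ∪ {x,x'}] by adding bichromatic edges between x and x' so that both x and x' have incident red half-edges and at least one bichromatic edge joins x and x'. Then (H, c_H) is a W-state graph. -/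
/-! The monochromatic edges never leave the side `X`, and a parity argument shows that every
bichromatic edge joins `X` to `X'`. Dropping the bichromatic edge at `x` from a perfect matching
therefore leaves a monochromatic perfect matching of `X - x`; together with the one of `X' - x'`
this matches `G - {x, x'}`, and it splits into monochromatic perfect matchings of `C` and of
`D = V - C - {x, x'}`. Hence `|C|` is even, and the real part of a perfect matching of `H` covers
either `C` or `C ∪ {x, x'}`. In the first case the matching uses a virtual edge at `x`, and it is
completed in `G` by a matching of `D ∪ {x, x'}` through a bichromatic edge; in the second case it
is completed by the monochromatic matching of `D`. Either way the matching condition of `G`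
leaves exactly one bichromatic edge in the perfect matching of `H`. -/

lemma Set.eq_or_eq_union_pair_of_even_ncard {α : Type*} [Finite α] {C S : Set α} {a b : α}
    (ha : a ∉ C) (hb : b ∉ C) (hC : Even C.ncard) (hS : Even S.ncard) (h₁ : C ⊆ S)
    (h₂ : S ⊆ C ∪ {a, b}) : S = C ∨ S = C ∪ {a, b} := by
  have hS' : ∀ y ∈ S, y ∉ C → y = a ∨ y = b := fun y hy hyC => by simpa [hyC] using h₂ hy
  have hodd : ∀ y ∉ C, S ≠ insert y C := fun y hy hSy => by
    rw [hSy, Set.ncard_insert_of_notMem hy] at hS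
    exact Nat.even_add_one.1 hS hC
  by_cases haS : a ∈ S <;> by_cases hbS : b ∈ S
  · exact .inr (h₂.antisymm (Set.union_subset h₁ (Set.pair_subset haS hbS)))
  · refine absurd ((Set.insert_subset haS h₁).antisymm' fun y hy => ?_) (hodd a ha)
    by_cases hyC : y ∈ C
    · exact .inr hyC
    · exact .inl ((hS' y hy hyC).resolve_right fun h => hbS (h ▸ hy))
  · refine absurd ((Set.insert_subset hbS h₁).antisymm' fun y hy => ?_) (hodd b hb)
    by_cases hyC : y ∈ C
    · exact .inr hyC
    · exact .inl ((hS' y hy hyC).resolve_left fun h => haS (h ▸ hy))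
  · exact .inl (h₁.antisymm' fun y hy => by_contra fun hyC =>
      (hS' y hy hyC).elim (fun h => haS (h ▸ hy)) fun h => hbS (h ▸ hy))

namespace Multigraph

open Set

variable {V E : Type} {G : Multigraph V E} {c : E → V → Bool}

def covered (G : Multigraph V E) (N : Set E) : Set V := {v | ∃ e ∈ N, G.Inc e v}

def inducedEdges (G : Multigraph V E) (S : Set V) : Set E := {e | G.fst e ∈ S ∧ G.snd e ∈ S}

section Matchings

variable {N M : Set E} {S : Set V} {e f : E} {v w : V}

lemma inc_fst (e : E) : G.Inc e (G.fst e) := Or.inl rfl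

lemma inc_snd (e : E) : G.Inc e (G.snd e) := Or.inr rfl

lemma inc_iff_mem_pair : G.Inc e v ↔ v ∈ ({G.fst e, G.snd e} : Set V) := by
  simp only [Inc, mem_insert_iff, mem_singleton_iff, eq_comm]

lemma mem_covered : v ∈ G.covered N ↔ ∃ e ∈ N, G.Inc e v := Iff.rfl

lemma pair_eq_of_inc (hv : G.Inc e v) (hw : G.Inc e w) (hvw : v ≠ w) :
    ({G.fst e, G.snd e} : Set V) = {v, w} := by
  rcases hv with rfl | rfl <;> rcases hw with rfl | rfl
  exacts [absurd rfl hvw, rfl, pair_comm _ _, absurd rfl hvw]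

lemma covered_union (N M : Set E) : G.covered (N ∪ M) = G.covered N ∪ G.covered M := by
  ext v
  simp only [mem_covered, mem_union, or_and_right, exists_or]

lemma covered_singleton (e : E) : G.covered {e} = {G.fst e, G.snd e} := by
  ext v
  simp only [mem_covered, mem_singleton_iff, exists_eq_left, inc_iff_mem_pair]

lemma mem_inducedEdges_iff : e ∈ G.inducedEdges S ↔ ∀ w, G.Inc e w → w ∈ S := by
  refine ⟨fun ⟨h₁, h₂⟩ w hw => ?_, fun h => ⟨h _ (inc_fst e), h _ (inc_snd e)⟩⟩
  rcases hw with rfl | rfl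
  exacts [h₁, h₂]

lemma covered_subset_of_subset_inducedEdges (h : N ⊆ G.inducedEdges S) : G.covered N ⊆ S :=
  fun _ ⟨_, he, hev⟩ => mem_inducedEdges_iff.1 (h he) _ hev

lemma covered_inter_inducedEdges (h : ∀ e ∈ N, ∀ v ∈ S, G.Inc e v → e ∈ G.inducedEdges S) :
    G.covered (N ∩ G.inducedEdges S) = G.covered N ∩ S := by
  ext v
  refine ⟨fun ⟨e, ⟨heN, heS⟩, hev⟩ => ⟨⟨e, heN, hev⟩, mem_inducedEdges_iff.1 heS v hev⟩,
    fun ⟨⟨e, heN, hev⟩, hv⟩ => ⟨e, ⟨heN, h e heN v hv hev⟩, hev⟩⟩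

lemma mem_inducedEdges_of_notMem_cutEdges (he : e ∉ G.CutEdges S) (hv : v ∈ S)
    (hev : G.Inc e v) : e ∈ G.inducedEdges S := by
  simp only [CutEdges, mem_ofPred_eq] at he
  rcases hev with rfl | rfl <;> exact ⟨by tauto, by tauto⟩

lemma cutEdges_compl (S : Set V) : G.CutEdges Sᶜ = G.CutEdges S := by
  ext e
  simp only [CutEdges, mem_ofPred_eq, mem_compl_iff, not_not]
  tauto

lemma IsMatching.anti (hM : G.IsMatching M) (h : N ⊆ M) : G.IsMatching N :=
  fun e he f hf hef v => hM e (h he) f (h hf) hef v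

lemma IsMatching.eq_of_inc (hM : G.IsMatching M) (he : e ∈ M) (hf : f ∈ M)
    (hev : G.Inc e v) (hfv : G.Inc f v) : e = f :=
  by_contra fun hef => hM e he f hf hef v ⟨hev, hfv⟩

lemma IsMatching.union (hN : G.IsMatching N) (hM : G.IsMatching M)
    (hd : Disjoint (G.covered N) (G.covered M)) : G.IsMatching (N ∪ M) := by
  rintro e (he | he) f (hf | hf) hef v ⟨hev, hfv⟩
  · exact hN e he f hf hef v ⟨hev, hfv⟩
  · exact hd.ne_of_mem ⟨e, he, hev⟩ ⟨f, hf, hfv⟩ rfl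
  · exact hd.ne_of_mem ⟨f, hf, hfv⟩ ⟨e, he, hev⟩ rfl
  · exact hM e he f hf hef v ⟨hev, hfv⟩

lemma isMatching_singleton (e : E) : G.IsMatching {e} := by
  rintro a rfl b rfl hab
  exact absurd rfl hab

lemma isPerfectMatching_iff :
    G.IsPerfectMatching M ↔ G.IsMatching M ∧ G.covered M = univ := by
  refine ⟨fun ⟨_, h⟩ => ⟨fun e he f hf hef v ⟨hev, hfv⟩ => ?_, ?_⟩, fun ⟨hM, hcov⟩ => ?_⟩
  · obtain ⟨g, -, hg⟩ := h v trivial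
    exact hef ((hg e ⟨he, hev⟩).trans (hg f ⟨hf, hfv⟩).symm)
  · refine eq_univ_of_forall fun v => ?_
    obtain ⟨g, ⟨hgM, hgv⟩, -⟩ := h v trivial
    exact ⟨g, hgM, hgv⟩
  · refine ⟨fun _ _ => ⟨trivial, trivial⟩, fun v _ => ?_⟩
    obtain ⟨e, he, hev⟩ := hcov.symm ▸ mem_univ v
    exact ⟨e, ⟨he, hev⟩, fun f ⟨hf, hfv⟩ => hM.eq_of_inc hf he hfv hev⟩

lemma isPerfectMatching_union (hN : G.IsMatching N) (hM : G.IsMatching M)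
    (h : G.covered M = (G.covered N)ᶜ) : G.IsPerfectMatching (N ∪ M) :=
  isPerfectMatching_iff.2 ⟨hN.union hM (h ▸ disjoint_compl_right),
    by rw [covered_union, h, union_compl_self]⟩

lemma IsPerfectMatching.covered_sdiff (hM : G.IsPerfectMatching M) (h : N ⊆ M) :
    G.covered (M \ N) = (G.covered N)ᶜ := by
  obtain ⟨hMm, hMc⟩ := isPerfectMatching_iff.1 hM
  ext v
  refine ⟨fun ⟨e, ⟨heM, heN⟩, hev⟩ ⟨f, hfN, hfv⟩ => heN (hMm.eq_of_inc heM (h hfN) hev hfv ▸ hfN),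
    fun hv => ?_⟩
  obtain ⟨e, heM, hev⟩ := hMc.symm ▸ mem_univ v
  exact ⟨e, ⟨heM, fun heN => hv ⟨e, heN, hev⟩⟩, hev⟩

lemma IsMatching.even_ncard_covered [Finite V] [Finite E] (hN : G.IsMatching N) :
    Even (G.covered N).ncard := by
  induction N, N.toFinite using Set.Finite.induction_on with
  | empty => simp [covered]
  | @insert e N heN _ ih =>
    have hdisj : Disjoint (G.covered {e}) (G.covered N) := by
      refine disjoint_left.2 fun v ⟨_, he, hev⟩ ⟨f, hf, hfv⟩ => ?_
      rw [mem_singleton_iff.1 he] at hev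
      exact heN (hN.eq_of_inc (mem_insert e N) (mem_insert_of_mem e hf) hev hfv ▸ hf)
    rw [insert_eq, covered_union, ncard_union_eq hdisj, covered_singleton, ncard_pair (G.no_loop e)]
    exact even_two.add (ih (hN.anti (subset_insert e N)))

end Matchings

section Components

variable {F : Set E} {S K : Set V} {e : E} {u v w : V}

lemma AdjIn.symm (h : G.AdjIn F u v) : G.AdjIn F v u :=
  ⟨h.1.symm, h.2.imp fun _ ⟨he, hu, hv⟩ => ⟨he, hv, hu⟩⟩

lemma adjIn_of_inc (he : e ∈ F) (hu : G.Inc e u) (hw : G.Inc e w) (huw : u ≠ w) :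
    G.AdjIn F u w :=
  ⟨huw, e, he, hu, hw⟩

lemma ReachOn.symm (h : G.ReachOn F S u v) : G.ReachOn F S v u := by
  induction h with
  | refl => exact .refl
  | tail _ hab ih => exact .head ⟨hab.2.1, hab.1, hab.2.2.symm⟩ ih

lemma IsCompOn.subset (hK : G.IsCompOn F S K) : K ⊆ S := by
  obtain ⟨_, _, rfl⟩ := hK
  exact fun _ hu => hu.1

lemma IsCompOn.mem_of_adjIn (hK : G.IsCompOn F S K) (hu : u ∈ K) (hw : w ∈ S)
    (hwu : G.AdjIn F w u) : w ∈ K := by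
  obtain ⟨_, _, rfl⟩ := hK
  exact ⟨hw, .head ⟨hw, hu.1, hwu⟩ hu.2⟩

lemma IsCompOn.mem_or_notMem_of_inc (hK : G.IsCompOn F S K) (hu : u ∈ K) (he : e ∈ F)
    (heu : G.Inc e u) (hew : G.Inc e w) : w ∈ K ∨ w ∉ S := by
  by_cases hwu : w = u
  · exact .inl (hwu ▸ hu)
  by_cases hw : w ∈ S
  · exact .inl (hK.mem_of_adjIn hu hw (adjIn_of_inc he hew heu hwu))
  · exact .inr hw

lemma IsCompOn.connectedOn_of_subset (hK : G.IsCompOn F S K) (h : S ⊆ K) :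
    G.ConnectedOn F S := by
  obtain ⟨v₀, -, rfl⟩ := hK
  exact fun u hu v hv => (h hu).2.trans (h hv).2.symm

end Components

section WState

variable {A X : Set V} {M N : Set E} {b e : E} {v x x' : V}

lemma IsCompOn.cutEdges_subset_bichromatic (hA : G.IsCompOn (G.MonoEdges c) univ A) :
    G.CutEdges A ⊆ {e | G.Bichromatic c e} := by
  intro e he
  by_contra hmono
  have hiff : G.fst e ∈ A ↔ G.snd e ∈ A :=
    ⟨fun h => (hA.mem_or_notMem_of_inc h hmono (inc_fst e) (inc_snd e)).resolve_right (· trivial),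
      fun h => (hA.mem_or_notMem_of_inc h hmono (inc_snd e) (inc_fst e)).resolve_right (· trivial)⟩
  simp only [CutEdges, mem_ofPred_eq] at he
  tauto

lemma exists_inc_bichromatic (hvc : G.VertexCond c) (hnr : G.NoRedMono c) (v : V) :
    ∃ e, G.Inc e v ∧ G.Bichromatic c e := by
  obtain ⟨e, hev, hred⟩ := hvc v
  refine ⟨e, hev, fun hmono => ?_⟩
  have hfst := hnr e (not_not.2 hmono)
  rcases hev with rfl | rfl
  · simp [hfst] at hred
  · simp [← hmono, hfst] at hred

lemma MatchingCond.eq_of_bichromatic (hmc : G.MatchingCond c) (hM : G.IsPerfectMatching M)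
    (he : e ∈ M) (hbe : G.Bichromatic c e) {f : E} (hf : f ∈ M) (hbf : G.Bichromatic c f) :
    f = e := by
  obtain ⟨_, -, hu⟩ := hmc M hM
  exact (hu f ⟨hf, hbf⟩).trans (hu e ⟨he, hbe⟩).symm

/-- The edges of `M` other than `b` are monochromatic, so none of them leaves `A`. -/
lemma covered_sdiff_inter_inducedEdges (hA : G.CutEdges A ⊆ {e | G.Bichromatic c e})
    (hmc : G.MatchingCond c) (hM : G.IsPerfectMatching M) (hb : b ∈ M)
    (hbb : G.Bichromatic c b) :
    (M \ {b}) ∩ G.inducedEdges A ⊆ G.MonoEdges c ∧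
      G.covered ((M \ {b}) ∩ G.inducedEdges A) = A \ {G.fst b, G.snd b} := by
  have hmono : M \ {b} ⊆ G.MonoEdges c := fun e ⟨heM, heb⟩ hbe =>
    heb (hmc.eq_of_bichromatic hM hb hbb heM hbe)
  refine ⟨inter_subset_left.trans hmono, ?_⟩
  rw [covered_inter_inducedEdges fun e he _ hv hev =>
      mem_inducedEdges_of_notMem_cutEdges (fun hcut => hmono he (hA hcut)) hv hev,
    hM.covered_sdiff (singleton_subset_iff.2 hb), covered_singleton, inter_comm, sdiff_eq]

variable [Finite V] [Finite E]

theorem IsWState.bichromatic_notMem_inducedEdges (hW : G.IsWState c)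
    (hA : G.CutEdges A ⊆ {e | G.Bichromatic c e}) (hAc : Aᶜ.Nonempty)
    (hbe : G.Bichromatic c e) : e ∉ G.inducedEdges A := by
  obtain ⟨hcov, hmc, hvc, hnr⟩ := hW
  intro heA
  obtain ⟨M, hM, heM⟩ := hcov e
  obtain ⟨hMmono, hMcov⟩ := covered_sdiff_inter_inducedEdges hA hmc hM heM hbe
  obtain ⟨v, hv⟩ := hAc
  obtain ⟨e', hev', hbe'⟩ := exists_inc_bichromatic hvc hnr v
  obtain ⟨M', hM', he'M'⟩ := hcov e'
  obtain ⟨hM'mono, hM'cov⟩ := covered_sdiff_inter_inducedEdges hA hmc hM' he'M' hbe'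
  have hMm := (isPerfectMatching_iff.1 hM).1
  have hM'm := (isPerfectMatching_iff.1 hM').1
  have hpair : {G.fst e, G.snd e} ⊆ A := pair_subset heA.1 heA.2
  by_cases he'A : e' ∈ G.inducedEdges Aᶜ
  · -- glue `M'` on `A` to `M` on `Aᶜ`: a perfect matching without bichromatic edges
    obtain ⟨hMmono', hMcov'⟩ := covered_sdiff_inter_inducedEdges
      (cutEdges_compl A ▸ hA) hmc hM heM hbe
    have hcovc : G.covered ((M \ {e}) ∩ G.inducedEdges Aᶜ) =
        (G.covered ((M' \ {e'}) ∩ G.inducedEdges A))ᶜ := by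
      rw [hMcov', hM'cov, sdiff_eq_left.2 (disjoint_compl_left.mono_right hpair),
        sdiff_eq_left.2 (disjoint_compl_right.mono_right (pair_subset he'A.1 he'A.2))]
    have hPM := isPerfectMatching_union (hM'm.anti (inter_subset_left.trans sdiff_subset))
      (hMm.anti (inter_subset_left.trans sdiff_subset)) hcovc
    obtain ⟨f, ⟨hf, hbf⟩, -⟩ := hmc _ hPM
    rcases hf with hf | hf
    exacts [hM'mono hf hbf, hMmono' hf hbf]
  · -- `e'` crosses `A`, so `A` has odd size, while `e` lies inside `A`, so `A` has even size
    obtain ⟨w, hew', hwA⟩ : ∃ w, G.Inc e' w ∧ w ∈ A := by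
      simpa [mem_inducedEdges_iff] using he'A
    have h₁ := hMcov ▸ (hMm.anti (inter_subset_left.trans sdiff_subset)).even_ncard_covered
    have h₂ := hM'cov ▸ (hM'm.anti (inter_subset_left.trans sdiff_subset)).even_ncard_covered
    rw [ncard_sdiff hpair, ncard_pair (G.no_loop e)] at h₁
    rw [pair_eq_of_inc hev' hew' fun h => hv (h ▸ hwA), sdiff_insert_of_notMem hv,
      ncard_sdiff_singleton_of_mem hwA] at h₂
    have h₃ : 2 ≤ A.ncard := ncard_pair (G.no_loop e) ▸ ncard_le_ncard hpair
    obtain ⟨k, hk⟩ := h₁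
    obtain ⟨l, hl⟩ := h₂
    omega

lemma even_ncard_covered_inter (hA : G.CutEdges A ⊆ {e | G.Bichromatic c e})
    (hN : G.IsMatching N) (hmono : N ⊆ G.MonoEdges c) : Even (G.covered N ∩ A).ncard := by
  rw [← covered_inter_inducedEdges fun e he _ hv hev =>
    mem_inducedEdges_of_notMem_cutEdges (fun hcut => hmono he (hA hcut)) hv hev]
  exact (hN.anti inter_subset_left).even_ncard_covered

theorem IsWState.exists_mono_matching_covered_eq_sdiff (hW : G.IsWState c)
    (hA : G.CutEdges A ⊆ {e | G.Bichromatic c e}) (hAc : Aᶜ.Nonempty) (hv : v ∈ A) :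
    ∃ N, G.IsMatching N ∧ N ⊆ G.MonoEdges c ∧ G.covered N = A \ {v} := by
  obtain ⟨e, hev, hbe⟩ := exists_inc_bichromatic hW.2.2.1 hW.2.2.2 v
  obtain ⟨M, hM, heM⟩ := hW.1 e
  obtain ⟨hmono, hcov⟩ := covered_sdiff_inter_inducedEdges hA hW.2.1 hM heM hbe
  obtain ⟨w, hew, hwA⟩ : ∃ w, G.Inc e w ∧ w ∉ A := by
    simpa [mem_inducedEdges_iff] using hW.bichromatic_notMem_inducedEdges hA hAc hbe
  refine ⟨_, (isPerfectMatching_iff.1 hM).1.anti (inter_subset_left.trans sdiff_subset),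
    hmono, ?_⟩
  rw [hcov, pair_eq_of_inc hev hew fun h => hwA (h ▸ hv), pair_comm, sdiff_insert_of_notMem hwA]

theorem IsWState.exists_mono_matching_covered_eq_compl_pair (hW : G.IsWState c)
    (hX : G.CutEdges X ⊆ {e | G.Bichromatic c e}) (hx : x ∈ X) (hx' : x' ∉ X) :
    ∃ K, G.IsMatching K ∧ K ⊆ G.MonoEdges c ∧ G.covered K = {x, x'}ᶜ := by
  obtain ⟨N, hN, hNmono, hNcov⟩ := hW.exists_mono_matching_covered_eq_sdiff hX ⟨x', hx'⟩ hx
  obtain ⟨N', hN', hN'mono, hN'cov⟩ := hW.exists_mono_matching_covered_eq_sdiff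
    (cutEdges_compl X ▸ hX) ⟨x, by simpa using hx⟩ hx'
  refine ⟨N ∪ N', hN.union hN' ?_, union_subset hNmono hN'mono, ?_⟩
  · rw [hNcov, hN'cov]
    exact disjoint_compl_right.mono sdiff_subset sdiff_subset
  · ext v
    by_cases hv : v ∈ X
    · simp [covered_union, hNcov, hN'cov, hv, ne_of_mem_of_not_mem hv hx']
    · simp [covered_union, hNcov, hN'cov, hv, (ne_of_mem_of_not_mem hx hv).symm]

end WState

section Separation

variable {K Z : Set V} {e : E} {u : V}

lemma IsCompOn.mem_inducedEdges_union (hK : G.IsCompOn univ (univ \ Z) K) (heu : G.Inc e u)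
    (hu : u ∈ K) : e ∈ G.inducedEdges (K ∪ Z) :=
  mem_inducedEdges_iff.2 fun _ hw =>
    (hK.mem_or_notMem_of_inc hu trivial heu hw).imp id fun h => by simpa using h

lemma IsCompOn.nonempty_compl_union {F : Set E} (hK : G.IsCompOn F (univ \ Z) K)
    (h : ¬ G.ConnectedOn F (univ \ Z)) : (K ∪ Z)ᶜ.Nonempty := by
  rw [nonempty_iff_ne_empty, Ne, compl_empty_iff]
  refine fun hKZ => h (hK.connectedOn_of_subset fun v hv => ?_)
  exact ((hKZ ▸ mem_univ v : v ∈ K ∪ Z)).resolve_right hv.2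

lemma mem_inducedEdges_compl_union
    (hK : ∀ e u, G.Inc e u → u ∈ K → e ∈ G.inducedEdges (K ∪ Z)) (heu : G.Inc e u)
    (hu : u ∈ (K ∪ Z)ᶜ) : e ∈ G.inducedEdges ((K ∪ Z)ᶜ ∪ Z) := by
  refine mem_inducedEdges_iff.2 fun w hw => ?_
  by_cases hwK : w ∈ K
  · exact absurd (mem_inducedEdges_iff.1 (hK e w hw hwK) u heu) hu
  · by_cases hwZ : w ∈ Z <;> simp [hwK, hwZ]

end Separation

section Block

variable [Finite V] [Finite E] {X S C : Set V} {x x' : V}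

theorem IsWState.exists_mono_matching_covered_eq (hW : G.IsWState c)
    (hX : G.CutEdges X ⊆ {e | G.Bichromatic c e}) (hx : x ∈ X) (hx' : x' ∉ X)
    (hxS : x ∉ S) (hx'S : x' ∉ S)
    (hS : ∀ e u, G.Inc e u → u ∈ S → e ∈ G.inducedEdges (S ∪ {x, x'})) :
    ∃ N, G.IsMatching N ∧ N ⊆ G.MonoEdges c ∧ G.covered N = S := by
  obtain ⟨K, hK, hKmono, hKcov⟩ := hW.exists_mono_matching_covered_eq_compl_pair hX hx hx'
  refine ⟨K ∩ G.inducedEdges S, hK.anti inter_subset_left, inter_subset_left.trans hKmono, ?_⟩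
  rw [covered_inter_inducedEdges fun e he u hu heu => ?_, hKcov]
  · exact inter_eq_right.2 fun v hv => by simp [ne_of_mem_of_not_mem hv hxS,
      ne_of_mem_of_not_mem hv hx'S]
  refine mem_inducedEdges_iff.2 fun w hw => ?_
  have hwK : w ∈ ({x, x'} : Set V)ᶜ := hKcov ▸ ⟨e, he, hw⟩
  exact (mem_inducedEdges_iff.1 (hS e u heu hu) w hw).resolve_right hwK

/-- A perfect matching through a bichromatic edge at a vertex outside `C ∪ {x, x'}` restricts to
a matching of `Cᶜ`: otherwise it would match `C ∪ {x, x'}` monochromatically, against the parity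
of `C ∩ X`. -/
theorem IsWState.exists_matching_covered_eq_compl (hW : G.IsWState c)
    (hX : G.CutEdges X ⊆ {e | G.Bichromatic c e}) (hx : x ∈ X) (hx' : x' ∉ X)
    (hxC : x ∉ C) (hx'C : x' ∉ C)
    (hC : ∀ e u, G.Inc e u → u ∈ C → e ∈ G.inducedEdges (C ∪ {x, x'}))
    (hD : (C ∪ {x, x'})ᶜ.Nonempty) {NC : Set E} (hNC : G.IsMatching NC)
    (hNCmono : NC ⊆ G.MonoEdges c) (hNCcov : G.covered NC = C) :
    ∃ T, G.IsMatching T ∧ G.covered T = Cᶜ ∧ ∃ b ∈ T, G.Bichromatic c b := by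
  obtain ⟨hcov, hmc, hvc, hnr⟩ := hW
  obtain ⟨d, hd⟩ := hD
  obtain ⟨g, hgd, hgb⟩ := exists_inc_bichromatic hvc hnr d
  obtain ⟨M, hM, hgM⟩ := hcov g
  obtain ⟨hMm, hMcov⟩ := isPerfectMatching_iff.1 hM
  set Q := M ∩ G.inducedEdges (C ∪ {x, x'})
  have hgQ : g ∉ Q := fun hg => hd (mem_inducedEdges_iff.1 hg.2 d hgd)
  have hCQ : C ⊆ G.covered Q := fun u hu => by
    obtain ⟨e, heM, heu⟩ := hMcov.symm ▸ mem_univ u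
    exact ⟨e, ⟨heM, hC e u heu hu⟩, heu⟩
  rcases eq_or_eq_union_pair_of_even_ncard hxC hx'C (hNCcov ▸ hNC.even_ncard_covered)
    (hMm.anti inter_subset_left).even_ncard_covered hCQ
    (covered_subset_of_subset_inducedEdges inter_subset_right) with hQ | hQ
  · exact ⟨M \ Q, hMm.anti sdiff_subset, by rw [hM.covered_sdiff inter_subset_left, hQ],
      g, ⟨hgM, hgQ⟩, hgb⟩
  · have hQmono : Q ⊆ G.MonoEdges c := fun e he hbe =>
      hgQ (hmc.eq_of_bichromatic hM hgM hgb he.1 hbe ▸ he)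
    have hodd := even_ncard_covered_inter hX (hMm.anti inter_subset_left) hQmono
    have hCX := even_ncard_covered_inter hX hNC hNCmono
    have hWX : (C ∪ {x, x'}) ∩ X = insert x (C ∩ X) := by
      ext v
      by_cases hv : v = x
      · simp [hv, hx]
      · simp only [mem_inter_iff, mem_union, mem_insert_iff, mem_singleton_iff, hv, false_or]
        grind
    rw [hQ, hWX, ncard_insert_of_notMem fun h => hxC h.1] at hodd
    exact (Nat.even_add_one.1 hodd (hNCcov ▸ hCX)).elim

end Block

def Joins (G : Multigraph V E) (e : E) (u v : V) : Prop :=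
  (G.fst e = u ∧ G.snd e = v) ∨ (G.fst e = v ∧ G.snd e = u)

lemma Joins.inc_left {e : E} {u v : V} (h : G.Joins e u v) : G.Inc e u := by
  rcases h with ⟨h, -⟩ | ⟨-, h⟩
  exacts [.inl h, .inr h]

lemma Joins.eq_or_eq_of_inc {e : E} {u v w : V} (h : G.Joins e u v) (hw : G.Inc e w) :
    w = u ∨ w = v := by
  rcases h with ⟨rfl, rfl⟩ | ⟨rfl, rfl⟩ <;> rcases hw with rfl | rfl <;> simp

lemma Joins.covered_singleton {e : E} {u v : V} (h : G.Joins e u v) :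
    G.covered {e} = {u, v} := by
  rcases h with ⟨hu, hv⟩ | ⟨hv, hu⟩
  · rw [Multigraph.covered_singleton, hu, hv]
  · rw [Multigraph.covered_singleton, hu, hv, pair_comm]

structure IsBlock {VH EH : Type} (G : Multigraph V E) (c : E → V → Bool) (C : Set V)
    (x x' : V) (H : Multigraph VH EH) (cH : EH → VH → Bool) (φ : VH → V) (ρ : EH → Option E)
    (vx vx' : VH) : Prop where
  injective : Function.Injective φ
  range_eq : range φ = C ∪ {x, x'}
  map_vx : φ vx = x
  map_vx' : φ vx' = x'
  real_ends : ∀ eh e, ρ eh = some e → φ (H.fst eh) = G.fst e ∧ φ (H.snd eh) = G.snd e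
  real_colour : ∀ eh e, ρ eh = some e → ∀ w, H.Inc eh w → cH eh w = c e (φ w)
  real_injective : ∀ eh eh' e, ρ eh = some e → ρ eh' = some e → eh = eh'
  real_surjective : ∀ e, G.fst e ∈ C ∪ {x, x'} → G.snd e ∈ C ∪ {x, x'} → ∃ eh, ρ eh = some e
  virtual : ∀ eh, ρ eh = none → H.Joins eh vx vx' ∧ H.Bichromatic cH eh

namespace IsBlock

variable {VH EH : Type} {C : Set V} {x x' : V} {H : Multigraph VH EH}
  {cH : EH → VH → Bool} {φ : VH → V} {ρ : EH → Option E} {vx vx' : VH}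
  {eh : EH} {e : E} {w : VH} {N : Set E} {P : Set EH}

lemma mem_range (hB : IsBlock G c C x x' H cH φ ρ vx vx') (w : VH) : φ w ∈ C ∪ {x, x'} :=
  hB.range_eq ▸ mem_range_self w

lemma inc_iff (hB : IsBlock G c C x x' H cH φ ρ vx vx') (h : ρ eh = some e) :
    H.Inc eh w ↔ G.Inc e (φ w) := by
  obtain ⟨h₁, h₂⟩ := hB.real_ends eh e h
  constructor
  · rintro (rfl | rfl)
    exacts [.inl h₁.symm, .inr h₂.symm]
  · rintro (hw | hw)
    exacts [.inl (hB.injective (h₁.trans hw)), .inr (hB.injective (h₂.trans hw))]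

lemma exists_inc_of_inc (hB : IsBlock G c C x x' H cH φ ρ vx vx') (h : ρ eh = some e) {v : V}
    (hv : G.Inc e v) : ∃ w, H.Inc eh w ∧ φ w = v := by
  obtain ⟨h₁, h₂⟩ := hB.real_ends eh e h
  rcases hv with rfl | rfl
  exacts [⟨_, inc_fst eh, h₁⟩, ⟨_, inc_snd eh, h₂⟩]

lemma bichromatic_iff (hB : IsBlock G c C x x' H cH φ ρ vx vx') (h : ρ eh = some e) :
    H.Bichromatic cH eh ↔ G.Bichromatic c e := by
  obtain ⟨h₁, h₂⟩ := hB.real_ends eh e h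
  rw [Bichromatic, Bichromatic, hB.real_colour eh e h _ (inc_fst eh),
    hB.real_colour eh e h _ (inc_snd eh), h₁, h₂]

lemma isMatching_preimage (hB : IsBlock G c C x x' H cH φ ρ vx vx') (hN : G.IsMatching N) :
    H.IsMatching (ρ ⁻¹' (some '' N)) := by
  rintro eh ⟨e, he, hρe⟩ fh ⟨f, hf, hρf⟩ hne w ⟨hew, hfw⟩
  obtain rfl := hN.eq_of_inc hf he ((hB.inc_iff hρf.symm).1 hfw) ((hB.inc_iff hρe.symm).1 hew)
  exact hne (hB.real_injective _ _ _ hρe.symm hρf.symm)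

lemma covered_preimage (hB : IsBlock G c C x x' H cH φ ρ vx vx')
    (hN : G.covered N ⊆ C ∪ {x, x'}) : H.covered (ρ ⁻¹' (some '' N)) = φ ⁻¹' G.covered N := by
  ext w
  constructor
  · rintro ⟨eh, ⟨e, he, hρ⟩, hw⟩
    exact ⟨e, he, (hB.inc_iff hρ.symm).1 hw⟩
  · rintro ⟨e, he, hw⟩
    obtain ⟨eh, hρ⟩ := hB.real_surjective e (hN ⟨e, he, inc_fst e⟩) (hN ⟨e, he, inc_snd e⟩)
    exact ⟨eh, ⟨e, he, hρ.symm⟩, (hB.inc_iff hρ).2 hw⟩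

lemma isPerfectMatching_preimage (hB : IsBlock G c C x x' H cH φ ρ vx vx')
    (hN : G.IsMatching N) (hcov : G.covered N = C ∪ {x, x'}) :
    H.IsPerfectMatching (ρ ⁻¹' (some '' N)) :=
  isPerfectMatching_iff.2 ⟨hB.isMatching_preimage hN, by
    rw [hB.covered_preimage hcov.subset, hcov, ← hB.range_eq, preimage_range]⟩

lemma isPerfectMatching_preimage_union (hB : IsBlock G c C x x' H cH φ ρ vx vx')
    (hxC : x ∉ C) (hx'C : x' ∉ C) (hN : G.IsMatching N) (hcov : G.covered N = C)
    (hj : H.Joins eh vx vx') : H.IsPerfectMatching (ρ ⁻¹' (some '' N) ∪ {eh}) := by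
  refine isPerfectMatching_union (hB.isMatching_preimage hN) (isMatching_singleton eh) ?_
  rw [hj.covered_singleton, hB.covered_preimage (hcov.subset.trans subset_union_left), hcov]
  ext w
  constructor
  · rintro (rfl | rfl)
    exacts [fun h => hxC (hB.map_vx ▸ h), fun h => hx'C (hB.map_vx' ▸ h)]
  · intro hw
    rcases (hB.mem_range w).resolve_left hw with h | h
    exacts [.inl (hB.injective (h.trans hB.map_vx.symm)),
      .inr (hB.injective (h.trans hB.map_vx'.symm))]

lemma isMatching_image (hB : IsBlock G c C x x' H cH φ ρ vx vx') (hP : H.IsMatching P) :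
    G.IsMatching (some ⁻¹' (ρ '' P)) := by
  rintro e ⟨eh, heh, hρe⟩ f ⟨fh, hfh, hρf⟩ hef v ⟨hev, hfv⟩
  obtain ⟨w, hw, rfl⟩ := hB.exists_inc_of_inc hρe hev
  refine hP eh heh fh hfh (fun h => hef ?_) w ⟨hw, (hB.inc_iff hρf).2 hfv⟩
  rw [h, hρf] at hρe
  exact (Option.some_injective _ hρe).symm

lemma covered_image_subset (hB : IsBlock G c C x x' H cH φ ρ vx vx') :
    G.covered (some ⁻¹' (ρ '' P)) ⊆ C ∪ {x, x'} := by
  rintro v ⟨e, ⟨eh, -, hρ⟩, hev⟩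
  obtain ⟨w, -, rfl⟩ := hB.exists_inc_of_inc hρ hev
  exact hB.mem_range w

lemma subset_covered_image (hB : IsBlock G c C x x' H cH φ ρ vx vx') (hxC : x ∉ C)
    (hx'C : x' ∉ C) (hP : H.IsPerfectMatching P) : C ⊆ G.covered (some ⁻¹' (ρ '' P)) := by
  intro u hu
  obtain ⟨w, rfl⟩ : u ∈ range φ := hB.range_eq ▸ Or.inl hu
  obtain ⟨eh, ⟨hehP, hw⟩, -⟩ := hP.2 w trivial
  cases hρ : ρ eh with
  | none =>
    rcases (hB.virtual eh hρ).1.eq_or_eq_of_inc hw with rfl | rfl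
    exacts [absurd (hB.map_vx ▸ hu) hxC, absurd (hB.map_vx' ▸ hu) hx'C]
  | some e => exact ⟨e, ⟨eh, hehP, hρ⟩, (hB.inc_iff hρ).1 hw⟩

theorem matchingCovered [Finite V] [Finite E] (hB : IsBlock G c C x x' H cH φ ρ vx vx')
    (hxC : x ∉ C) (hx'C : x' ∉ C) (hG : G.MatchingCovered) (hCeven : Even C.ncard)
    (hC : ∀ e u, G.Inc e u → u ∈ C → e ∈ G.inducedEdges (C ∪ {x, x'}))
    (hNC : ∃ N, G.IsMatching N ∧ G.covered N = C) (hjoin : ∃ eh, H.Joins eh vx vx') :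
    H.MatchingCovered := by
  obtain ⟨NC, hNC, hNCcov⟩ := hNC
  obtain ⟨est, hest⟩ := hjoin
  intro eh
  by_cases hj : H.Joins eh vx vx'
  · exact ⟨_, hB.isPerfectMatching_preimage_union hxC hx'C hNC hNCcov hj, .inr rfl⟩
  obtain ⟨f, hρf⟩ := Option.ne_none_iff_exists'.1 fun h => hj (hB.virtual eh h).1
  obtain ⟨M, hM, hfM⟩ := hG f
  obtain ⟨hMm, hMcov⟩ := isPerfectMatching_iff.1 hM
  set N := M ∩ G.inducedEdges (C ∪ {x, x'})
  have hN : G.IsMatching N := hMm.anti inter_subset_left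
  have hehN : eh ∈ ρ ⁻¹' (some '' N) := by
    obtain ⟨h₁, h₂⟩ := hB.real_ends eh f hρf
    exact ⟨f, ⟨hfM, h₁ ▸ hB.mem_range _, h₂ ▸ hB.mem_range _⟩, hρf.symm⟩
  have hCN : C ⊆ G.covered N := fun u hu => by
    obtain ⟨e, heM, heu⟩ := hMcov.symm ▸ mem_univ u
    exact ⟨e, ⟨heM, hC e u heu hu⟩, heu⟩
  rcases eq_or_eq_union_pair_of_even_ncard hxC hx'C hCeven hN.even_ncard_covered hCN
    (covered_subset_of_subset_inducedEdges inter_subset_right) with hcov | hcov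
  · exact ⟨_, hB.isPerfectMatching_preimage_union hxC hx'C hN hcov hest, .inl hehN⟩
  · exact ⟨_, hB.isPerfectMatching_preimage hN hcov, hehN⟩

/-- A perfect matching of `H` missing `x` in its real part uses a virtual edge; completed by
`T`, its real part is monochromatic. -/
lemma existsUnique_bichromatic_of_covered_image_eq (hB : IsBlock G c C x x' H cH φ ρ vx vx')
    (hxC : x ∉ C) (hG : G.MatchingCond c)
    (hT : ∃ T, G.IsMatching T ∧ G.covered T = Cᶜ ∧ ∃ b ∈ T, G.Bichromatic c b)
    (hP : H.IsPerfectMatching P) (hcov : G.covered (some ⁻¹' (ρ '' P)) = C) :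
    ∃! eh, eh ∈ P ∧ H.Bichromatic cH eh := by
  obtain ⟨T, hTm, hTcov, b, hbT, hbb⟩ := hT
  have hPm := (isPerfectMatching_iff.1 hP).1
  have hM := isPerfectMatching_union (hB.isMatching_image hPm) hTm (hcov ▸ hTcov)
  have hvirtual : ∀ p ∈ P, H.Bichromatic cH p → ρ p = none := by
    intro p hpP hpb
    cases hρ : ρ p with
    | none => rfl
    | some e =>
      have hbe := (hB.bichromatic_iff hρ).1 hpb
      obtain rfl := hG.eq_of_bichromatic hM (.inr hbT) hbb (.inl ⟨p, hpP, hρ⟩) hbe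
      exact absurd (hTcov ▸ ⟨e, hbT, inc_fst e⟩ : G.fst e ∈ Cᶜ) (not_not.2
        (hcov ▸ ⟨e, ⟨p, hpP, hρ⟩, inc_fst e⟩))
  obtain ⟨g, ⟨hgP, hgx⟩, -⟩ := hP.2 vx trivial
  have hg : ρ g = none := by
    cases hρ : ρ g with
    | none => rfl
    | some e =>
      exact absurd (hcov ▸ ⟨e, ⟨g, hgP, hρ⟩, hB.map_vx ▸ (hB.inc_iff hρ).1 hgx⟩) hxC
  exact ⟨g, ⟨hgP, (hB.virtual g hg).2⟩, fun p ⟨hpP, hpb⟩ =>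
    hPm.eq_of_inc hpP hgP (hB.virtual p (hvirtual p hpP hpb)).1.inc_left hgx⟩

/-- A perfect matching of `H` covering `x` by a real edge is completed to one of `G` by the
monochromatic matching of `(C ∪ {x, x'})ᶜ`, so the bichromatic edge of the union lies in `H`. -/
lemma existsUnique_bichromatic_of_covered_image_eq_union
    (hB : IsBlock G c C x x' H cH φ ρ vx vx') (hG : G.MatchingCond c)
    (hND : ∃ N, G.IsMatching N ∧ N ⊆ G.MonoEdges c ∧ G.covered N = (C ∪ {x, x'})ᶜ)
    (hP : H.IsPerfectMatching P) (hcov : G.covered (some ⁻¹' (ρ '' P)) = C ∪ {x, x'}) :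
    ∃! eh, eh ∈ P ∧ H.Bichromatic cH eh := by
  obtain ⟨ND, hNDm, hNDmono, hNDcov⟩ := hND
  have hPm := (isPerfectMatching_iff.1 hP).1
  have hM := isPerfectMatching_union (hB.isMatching_image hPm) hNDm (hcov ▸ hNDcov)
  obtain ⟨b, ⟨hbM, hbb⟩, -⟩ := hG _ hM
  obtain ⟨bh, hbhP, hρb⟩ := hbM.resolve_right fun h => hNDmono h hbb
  have hreal : ∀ p ∈ P, ρ p ≠ none := by
    have hx : x ∈ G.covered (some ⁻¹' (ρ '' P)) := hcov ▸ .inr (.inl rfl)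
    obtain ⟨e, ⟨q, hqP, hρq⟩, hex⟩ := hx
    intro p hpP hρp
    obtain rfl := hPm.eq_of_inc hpP hqP (hB.virtual p hρp).1.inc_left
      ((hB.inc_iff hρq).2 (hB.map_vx ▸ hex))
    simp [hρq] at hρp
  refine ⟨bh, ⟨hbhP, (hB.bichromatic_iff hρb).2 hbb⟩, fun p ⟨hpP, hpb⟩ => ?_⟩
  obtain ⟨e, hρp⟩ := Option.ne_none_iff_exists'.1 (hreal p hpP)
  obtain rfl := hG.eq_of_bichromatic hM (.inl ⟨bh, hbhP, hρb⟩) hbb (.inl ⟨p, hpP, hρp⟩)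
    ((hB.bichromatic_iff hρp).1 hpb)
  exact hB.real_injective _ _ _ hρp hρb

theorem matchingCond [Finite V] [Finite E] (hB : IsBlock G c C x x' H cH φ ρ vx vx')
    (hxC : x ∉ C) (hx'C : x' ∉ C) (hG : G.MatchingCond c) (hCeven : Even C.ncard)
    (hT : ∃ T, G.IsMatching T ∧ G.covered T = Cᶜ ∧ ∃ b ∈ T, G.Bichromatic c b)
    (hND : ∃ N, G.IsMatching N ∧ N ⊆ G.MonoEdges c ∧ G.covered N = (C ∪ {x, x'})ᶜ) :
    H.MatchingCond cH := by
  intro P hP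
  have hN := hB.isMatching_image (isPerfectMatching_iff.1 hP).1
  rcases eq_or_eq_union_pair_of_even_ncard hxC hx'C hCeven hN.even_ncard_covered
    (hB.subset_covered_image hxC hx'C hP) hB.covered_image_subset with hcov | hcov
  · exact hB.existsUnique_bichromatic_of_covered_image_eq hxC hG hT hP hcov
  · exact hB.existsUnique_bichromatic_of_covered_image_eq_union hG hND hP hcov

theorem vertexCond (hB : IsBlock G c C x x' H cH φ ρ vx vx') (hG : G.VertexCond c)
    (hC : ∀ e u, G.Inc e u → u ∈ C → e ∈ G.inducedEdges (C ∪ {x, x'}))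
    (hredx : ∃ eh, H.Inc eh vx ∧ cH eh vx = true)
    (hredx' : ∃ eh, H.Inc eh vx' ∧ cH eh vx' = true) : H.VertexCond cH := by
  intro w
  rcases hB.mem_range w with hw | hw | hw
  · obtain ⟨e, hew, hred⟩ := hG (φ w)
    obtain ⟨eh, hρ⟩ := hB.real_surjective e (hC e _ hew hw).1 (hC e _ hew hw).2
    have hinc := (hB.inc_iff hρ).2 hew
    exact ⟨eh, hinc, (hB.real_colour eh e hρ w hinc).trans hred⟩
  · exact hB.injective (hw.trans hB.map_vx.symm) ▸ hredx
  · exact hB.injective (hw.trans hB.map_vx'.symm) ▸ hredx'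

theorem noRedMono (hB : IsBlock G c C x x' H cH φ ρ vx vx') (hG : G.NoRedMono c) :
    H.NoRedMono cH := by
  intro eh hmono
  cases hρ : ρ eh with
  | none => exact absurd (hB.virtual eh hρ).2 hmono
  | some e =>
    rw [hB.real_colour eh e hρ _ (inc_fst eh), (hB.real_ends eh e hρ).1]
    exact hG e (mt (hB.bichromatic_iff hρ).2 hmono)

end IsBlock

end Multigraph

theorem stmt18_general {V E VH EH : Type}
    [Fintype V] [Fintype E]
    (G : Multigraph V E) (c : E → V → Bool) (h : G.IsWState c)
    (X X' : Set V) (hd : Disjoint X X')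
    (hX : G.IsCompOn (G.MonoEdges c) Set.univ X)
    (x x' : V) (hx : x ∈ X) (hx' : x' ∈ X')
    (hcut : ¬ G.ConnectedOn Set.univ (Set.univ \ {x, x'}))
    (C : Set V) (hC : G.IsCompOn Set.univ (Set.univ \ {x, x'}) C)
    (H : Multigraph VH EH) (cH : EH → VH → Bool)
    (φ : VH → V) (hφ : Function.Injective φ)
    (hrange : Set.range φ = C ∪ {x, x'})
    (vx vx' : VH) (hvx : φ vx = x) (hvx' : φ vx' = x')
    (ρ : EH → Option E)
    -- real edges of H correspond to the edges of G induced on C ∪ {x,x'}: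
    (hreal_end : ∀ eh e, ρ eh = some e →
        φ (H.fst eh) = G.fst e ∧ φ (H.snd eh) = G.snd e)
    (hreal_col : ∀ eh e, ρ eh = some e →
        ∀ w : VH, H.Inc eh w → cH eh w = c e (φ w))
    (hreal_inj : ∀ eh eh' e, ρ eh = some e → ρ eh' = some e → eh = eh')
    (hreal_surj : ∀ e : E, G.fst e ∈ C ∪ {x, x'} → G.snd e ∈ C ∪ {x, x'} →
        ∃ eh, ρ eh = some e)
    -- virtual edges are bichromatic edges between x and x':
    (hvirt : ∀ eh, ρ eh = none →
        ((H.fst eh = vx ∧ H.snd eh = vx') ∨ (H.fst eh = vx' ∧ H.snd eh = vx)) ∧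
        H.Bichromatic cH eh)
    -- the vertex condition holds at x and x' in H:
    (hredx : ∃ eh, H.Inc eh vx ∧ cH eh vx = true)
    (hredx' : ∃ eh, H.Inc eh vx' ∧ cH eh vx' = true)
    -- at least one bichromatic edge of H joins x and x':
    (hjoin : ∃ eh, H.Bichromatic cH eh ∧
        ((H.fst eh = vx ∧ H.snd eh = vx') ∨ (H.fst eh = vx' ∧ H.snd eh = vx))) :
    H.IsWState cH := by
  have hside := hX.cutEdges_subset_bichromatic
  have hx'X : x' ∉ X := Set.disjoint_right.1 hd hx'
  have hxC : x ∉ C := fun h => (hC.subset h).2 (.inl rfl)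
  have hx'C : x' ∉ C := fun h => (hC.subset h).2 (.inr rfl)
  have hCsep : ∀ e u, G.Inc e u → u ∈ C → e ∈ G.inducedEdges (C ∪ {x, x'}) :=
    fun _ _ => hC.mem_inducedEdges_union
  have hB : G.IsBlock c C x x' H cH φ ρ vx vx' :=
    ⟨hφ, hrange, hvx, hvx', hreal_end, hreal_col, hreal_inj, hreal_surj, hvirt⟩
  obtain ⟨NC, hNC, hNCmono, hNCcov⟩ :=
    h.exists_mono_matching_covered_eq hside hx hx'X hxC hx'C hCsep
  obtain ⟨ND, hND, hNDmono, hNDcov⟩ := h.exists_mono_matching_covered_eq hside hx hx'X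
    (by simp) (by simp) fun _ _ => Multigraph.mem_inducedEdges_compl_union hCsep
  have hT := h.exists_matching_covered_eq_compl hside hx hx'X hxC hx'C hCsep
    (hC.nonempty_compl_union hcut) hNC hNCmono hNCcov
  have hCeven : Even C.ncard := hNCcov ▸ hNC.even_ncard_covered
  exact ⟨hB.matchingCovered hxC hx'C h.1 hCeven hCsep ⟨NC, hNC, hNCcov⟩
      (hjoin.imp fun _ => And.right),
    hB.matchingCond hxC hx'C h.2.1 hCeven hT ⟨ND, hND, hNDmono, hNDcov⟩,
    hB.vertexCond h.2.2.1 hCsep hredx hredx', hB.noRedMono h.2.2.2⟩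

/-- W-blocks are W-state graphs.  Let `(G,c)` be a W-state graph
whose monochromatic subgraph has the two factor-critical components `X, X'`,
let `{x,x'}` with `x ∈ X`, `x' ∈ X'` be a 2-vertex cut, and let `C` be a
connected component of `G - {x,x'}`.  Let `(H,cH)` be obtained from the
induced subgraph `G[C ∪ {x,x'}]` (real edges, described by `ρ eh = some e`,
with endpoints and colours inherited along the vertex injection `φ`) by adding
virtual bichromatic edges between `x` and `x'` (described by `ρ eh = none`)
so that both `x` and `x'` have incident red half-edges in `H` and at least one
bichromatic edge of `H` joins them.  Then `(H,cH)` is a W-state graph. -/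
theorem stmt18 {V E VH EH : Type}
    [Fintype V] [Fintype E] [Fintype VH] [Fintype EH]
    (G : Multigraph V E) (c : E → V → Bool) (h : G.IsWState c)
    (X X' : Set V) (hd : Disjoint X X') (hu : X ∪ X' = Set.univ)
    (hX : G.IsCompOn (G.MonoEdges c) Set.univ X)
    (hX' : G.IsCompOn (G.MonoEdges c) Set.univ X')
    (x x' : V) (hx : x ∈ X) (hx' : x' ∈ X')
    (hcut : ¬ G.ConnectedOn Set.univ (Set.univ \ {x, x'}))
    (C : Set V) (hC : G.IsCompOn Set.univ (Set.univ \ {x, x'}) C)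
    (H : Multigraph VH EH) (cH : EH → VH → Bool)
    (φ : VH → V) (hφ : Function.Injective φ)
    (hrange : Set.range φ = C ∪ {x, x'})
    (vx vx' : VH) (hvx : φ vx = x) (hvx' : φ vx' = x')
    (ρ : EH → Option E)
    -- real edges of H correspond to the edges of G induced on C ∪ {x,x'}:
    (hreal_end : ∀ eh e, ρ eh = some e →
        φ (H.fst eh) = G.fst e ∧ φ (H.snd eh) = G.snd e)
    (hreal_col : ∀ eh e, ρ eh = some e →
        ∀ w : VH, H.Inc eh w → cH eh w = c e (φ w))
    (hreal_inj : ∀ eh eh' e, ρ eh = some e → ρ eh' = some e → eh = eh')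
    (hreal_surj : ∀ e : E, G.fst e ∈ C ∪ {x, x'} → G.snd e ∈ C ∪ {x, x'} →
        ∃ eh, ρ eh = some e)
    -- virtual edges are bichromatic edges between x and x':
    (hvirt : ∀ eh, ρ eh = none →
        ((H.fst eh = vx ∧ H.snd eh = vx') ∨ (H.fst eh = vx' ∧ H.snd eh = vx)) ∧
        H.Bichromatic cH eh)
    -- the vertex condition holds at x and x' in H:
    (hredx : ∃ eh, H.Inc eh vx ∧ cH eh vx = true)
    (hredx' : ∃ eh, H.Inc eh vx' ∧ cH eh vx' = true)
    -- at least one bichromatic edge of H joins x and x':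
    (hjoin : ∃ eh, H.Bichromatic cH eh ∧
        ((H.fst eh = vx ∧ H.snd eh = vx') ∨ (H.fst eh = vx' ∧ H.snd eh = vx))) :
    H.IsWState cH :=
  stmt18_general G c h X X' hd hX x x' hx hx' hcut C hC H cH φ hφ hrange vx vx' hvx hvx' ρ hreal_end
    hreal_col hreal_inj hreal_surj hvirt hredx hredx' hjoin
end
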